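/- arXiv:2211.06794 — 2 statements merged into one kernel-verified Lean document; each statement's English description precedes it below -/
import Mathlib

section
/- For any positive definite operator ρ on a finite-dimensional complex inner product space, the operator logarithm admits the integral representation ln ρ = ∫₀^∞ ( (1+s)^{-1} · 1 − (ρ + s·1)^{-1} ) ds, where the integral converges in operator norm. -/
/-!
Diagonalising `ρ` reduces the statement to its eigenvalues: for `s ≥ 0` the integrand is the
functional calculus of `x ↦ (1 + s)⁻¹ - (x + s)⁻¹`, and for `l > 0` the scalar integral
`∫₀^∞ ((1 + s)⁻¹ - (l + s)⁻¹) ds` equals `log l`, because `log (1 + s) - log (l + s)` is an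
antiderivative that vanishes at infinity. The scalar integrand has the constant sign of `l - 1`,
which gives integrability.
-/

open MeasureTheory Matrix Set Filter
open scoped Matrix.Norms.L2Operator ComplexOrder Topology

namespace Real

lemma hasDerivAt_log_one_add_sub_log_add {l s : ℝ} (h1 : 0 < 1 + s) (hl : 0 < l + s) :
    HasDerivAt (fun t => log (1 + t) - log (l + t)) ((1 + s)⁻¹ - (l + s)⁻¹) s := by
  have h1' := ((hasDerivAt_id s).const_add 1).log h1.ne'
  have hl' := ((hasDerivAt_id s).const_add l).log hl.ne'
  simpa [one_div] using h1'.fun_sub hl'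

lemma tendsto_log_one_add_sub_log_add_atTop (l : ℝ) :
    Tendsto (fun t => log (1 + t) - log (l + t)) atTop (𝓝 0) := by
  have hratio : Tendsto (fun t => (1 + t) / (l + t)) atTop (𝓝 1) := by
    have : Tendsto (fun t => 1 - (l - 1) / (l + t)) atTop (𝓝 (1 - 0)) :=
      tendsto_const_nhds.sub <|
        tendsto_const_nhds.div_atTop (tendsto_atTop_add_const_left _ _ tendsto_id)
    refine (sub_zero (1 : ℝ) ▸ this).congr' ?_
    filter_upwards [eventually_gt_atTop (-l)] with t ht
    have : l + t ≠ 0 := by linarith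
    field_simp
    ring
  have hlog := (continuousAt_log one_ne_zero).tendsto.comp hratio
  rw [log_one] at hlog
  refine hlog.congr' ?_
  filter_upwards [eventually_gt_atTop (-1), eventually_gt_atTop (-l)] with t h1 hl
  rw [Function.comp_apply, log_div (by linarith) (by linarith)]

variable {l : ℝ}

lemma integrableOn_Ioi_inv_one_add_sub_inv_add (hl : 0 < l) :
    IntegrableOn (fun s : ℝ => (1 + s)⁻¹ - (l + s)⁻¹) (Ioi 0) := by
  have hderiv : ∀ s ∈ Ici (0 : ℝ), HasDerivAt (fun t => log (1 + t) - log (l + t))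
      ((1 + s)⁻¹ - (l + s)⁻¹) s := fun s (hs : 0 ≤ s) ↦
    hasDerivAt_log_one_add_sub_log_add (by linarith) (by linarith)
  rcases le_total 1 l with h | h
  · refine integrableOn_Ioi_deriv_of_nonneg' hderiv (fun s (hs : 0 < s) ↦ ?_)
      (tendsto_log_one_add_sub_log_add_atTop l)
    exact sub_nonneg.2 (inv_anti₀ (by positivity) (by linarith))
  · refine integrableOn_Ioi_deriv_of_nonpos' hderiv (fun s (hs : 0 < s) ↦ ?_)
      (tendsto_log_one_add_sub_log_add_atTop l)
    exact sub_nonpos.2 (inv_anti₀ (by positivity) (by linarith))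

lemma integral_Ioi_inv_one_add_sub_inv_add (hl : 0 < l) :
    ∫ s in Ioi (0 : ℝ), ((1 + s)⁻¹ - (l + s)⁻¹) = log l := by
  rw [integral_Ioi_of_hasDerivAt_of_tendsto' (fun s (hs : 0 ≤ s) ↦
    hasDerivAt_log_one_add_sub_log_add (by linarith) (by linarith))
    (integrableOn_Ioi_inv_one_add_sub_inv_add hl) (tendsto_log_one_add_sub_log_add_atTop l)]
  simp

end Real

namespace Matrix.IsHermitian

variable {n : Type*} [Fintype n] [DecidableEq n] {A : Matrix n n ℂ} (hA : A.IsHermitian)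

lemma cfc_eq_sum_smul (f : ℝ → ℝ) :
    hA.cfc f = ∑ i, f (hA.eigenvalues i) •
      Unitary.conjStarAlgAut ℂ _ hA.eigenvectorUnitary (single i i 1) := by
  rw [IsHermitian.cfc, ← sum_single_eq_diagonal, map_sum]
  refine Finset.sum_congr rfl fun i _ => ?_
  rw [← Complex.coe_smul, ← map_smul, smul_single, smul_eq_mul, mul_one, Function.comp_apply,
    Function.comp_apply]
  rfl

lemma cfc_congr_eigenvalues {f g : ℝ → ℝ}
    (hfg : ∀ i, f (hA.eigenvalues i) = g (hA.eigenvalues i)) : hA.cfc f = hA.cfc g := by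
  simp only [cfc_eq_sum_smul, hfg]

variable {α : Type*} [MeasurableSpace α] {μ : Measure α} {f : α → ℝ → ℝ}

lemma integrable_cfc (hf : ∀ i, Integrable (fun a => f a (hA.eigenvalues i)) μ) :
    Integrable (fun a => hA.cfc (f a)) μ := by
  simp_rw [cfc_eq_sum_smul]
  exact integrable_finsetSum _ fun i _ => (hf i).smul_const _

lemma integral_cfc (hf : ∀ i, Integrable (fun a => f a (hA.eigenvalues i)) μ) :
    ∫ a, hA.cfc (f a) ∂μ = hA.cfc (fun x => ∫ a, f a x ∂μ) := by
  simp_rw [cfc_eq_sum_smul]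
  rw [integral_finsetSum _ fun i _ => (hf i).smul_const _]
  simp_rw [integral_smul_const]

end Matrix.IsHermitian

lemma Matrix.PosDef.smul_one_sub_inv_add_smul_one_eq_cfc {n : Type*} [Fintype n] [DecidableEq n]
    {A : Matrix n n ℂ} (hA : A.PosDef) (c : ℝ) {s : ℝ} (hs : 0 ≤ s) :
    (c : ℂ) • 1 - (A + (s : ℂ) • 1)⁻¹ = hA.1.cfc (fun x => c - (x + s)⁻¹) := by
  have hne : ∀ x ∈ spectrum ℝ A, x + s ≠ 0 := by
    rw [hA.1.spectrum_real_eq_range_eigenvalues]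
    rintro - ⟨i, rfl⟩
    exact (add_pos_of_pos_of_nonneg (hA.eigenvalues_pos i) hs).ne'
  have hA' : IsSelfAdjoint A := hA.1
  rw [← hA.1.cfc_eq, cfc_sub (fun _ => c) (fun x => (x + s)⁻¹) A continuousOn_const
      ((continuousOn_id.add continuousOn_const).inv₀ hne),
    cfc_const c A, cfc_inv (fun x => x + s) A hne, cfc_add_const s (fun x => x) A, cfc_id' ℝ A,
    nonsing_inv_eq_ringInverse, Algebra.algebraMap_eq_smul_one, Algebra.algebraMap_eq_smul_one,
    Complex.coe_smul, Complex.coe_smul]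

/-- For a positive definite operator `ρ` on a finite-dimensional complex Hilbert space,
`ln ρ = ∫₀^∞ ((1+s)⁻¹ • 1 − (ρ + s•1)⁻¹) ds`, the integral converging (in operator norm). -/
theorem log_integral_representation {n : Type*} [Fintype n] [DecidableEq n]
    (ρ : Matrix n n ℂ) (hρ : ρ.PosDef) :
    IntegrableOn
      (fun s : ℝ => ((1 + s : ℂ))⁻¹ • (1 : Matrix n n ℂ) - (ρ + (s : ℂ) • 1)⁻¹)
      (Set.Ioi 0) volume ∧
    (∫ s : ℝ in Set.Ioi 0,
        (((1 + s : ℂ))⁻¹ • (1 : Matrix n n ℂ) - (ρ + (s : ℂ) • 1)⁻¹)) =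
      hρ.1.cfc Real.log := by
  let f : ℝ → ℝ → ℝ := fun s x => (1 + s)⁻¹ - (x + s)⁻¹
  have hint (i : n) : IntegrableOn (fun s => f s (hρ.1.eigenvalues i)) (Ioi 0) :=
    Real.integrableOn_Ioi_inv_one_add_sub_inv_add (hρ.eigenvalues_pos i)
  have hintegrand : EqOn (fun s => hρ.1.cfc (f s))
      (fun s : ℝ => ((1 + s : ℂ))⁻¹ • (1 : Matrix n n ℂ) - (ρ + (s : ℂ) • 1)⁻¹) (Ioi 0) :=
    fun s (hs : 0 < s) => by
      simpa [f] using (hρ.smul_one_sub_inv_add_smul_one_eq_cfc (1 + s)⁻¹ hs.le).symm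
  refine ⟨IntegrableOn.congr_fun (hρ.1.integrable_cfc hint) hintegrand measurableSet_Ioi,
    ?_⟩
  rw [← setIntegral_congr_fun measurableSet_Ioi hintegrand, hρ.1.integral_cfc hint]
  exact hρ.1.cfc_congr_eigenvalues fun i =>
    Real.integral_Ioi_inv_one_add_sub_inv_add (hρ.eigenvalues_pos i)
end

section
/- Let ρ̃ be a positive definite operator whose smallest eigenvalue is λ_min > 0, and let Δρ be self-adjoint. Then | tr( ∫₀^∞ s (ρ̃+s·1)^{-1} Δρ (ρ̃+s·1)^{-1} Δρ (ρ̃+s·1)^{-1} ds ) | ≤ ‖Δρ‖₁² / (2 λ_min), where ‖·‖₁ denotes the trace norm. -/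
/-!
Write `ρ = U diag(d) U⋆` and `B = U⋆ Δ U` (Hermitian). In this eigenbasis
`tr((ρ+s)⁻¹ Δ (ρ+s)⁻¹ Δ (ρ+s)⁻¹) = ∑ᵢⱼ (dᵢ+s)⁻² (dⱼ+s)⁻¹ |Bᵢⱼ|²`, a sum of nonnegative terms
bounded by `(λ_min+s)⁻³ ∑ᵢⱼ |Bᵢⱼ|² = (λ_min+s)⁻³ tr Δ²`. With `μ` the eigenvalues of `Δ`,
`tr Δ² = ∑ μᵢ² ≤ (∑ |μᵢ|)² = ‖Δ‖₁²`, and `∫₀^∞ s (λ+s)⁻³ ds = 1/(2λ)` finishes the estimate.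
-/

open MeasureTheory Matrix
open scoped Matrix.Norms.L2Operator ComplexOrder

/-- The square root of a positive semidefinite matrix, as defined in Mathlib of December 2024
(`Matrix.PosSemidef.sqrt`, since removed from Mathlib). -/
noncomputable def Matrix.PosSemidef.sqrt {n 𝕜 : Type*} [Fintype n] [RCLike 𝕜] [DecidableEq n]
    {A : Matrix n n 𝕜} (hA : A.PosSemidef) : Matrix n n 𝕜 :=
  hA.1.eigenvectorUnitary.1 * diagonal ((↑) ∘ (fun i => Real.sqrt (hA.1.eigenvalues i))) *
    (star hA.1.eigenvectorUnitary : Matrix n n 𝕜)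

/-- The trace norm `‖A‖₁ = tr √(Aᴴ A)` of a matrix. -/
noncomputable def traceNorm {m n : Type*} [Fintype m] [Fintype n] [DecidableEq n]
    (A : Matrix m n ℂ) : ℝ :=
  ((Matrix.posSemidef_conjTranspose_mul_self A).sqrt).trace.re

namespace Matrix
variable {n 𝕜 : Type*} [Fintype n] [DecidableEq n] [RCLike 𝕜]

theorem trace_conjStarAlgAut (U : unitary (Matrix n n 𝕜)) (A : Matrix n n 𝕜) :
    (Unitary.conjStarAlgAut 𝕜 _ U A).trace = A.trace := by
  rw [Unitary.conjStarAlgAut_apply, trace_mul_cycle, Unitary.coe_star_mul_self, one_mul]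

theorem IsHermitian.trace_cfc {A : Matrix n n 𝕜} (hA : A.IsHermitian) (f : ℝ → ℝ) :
    (cfc f A).trace = ((∑ i, f (hA.eigenvalues i) : ℝ) : 𝕜) := by
  rw [hA.cfc_eq, IsHermitian.cfc, trace_conjStarAlgAut, trace_diagonal, RCLike.ofReal_sum]
  rfl

theorem PosSemidef.sqrt_eq_cfc {A : Matrix n n 𝕜} (hA : A.PosSemidef) :
    hA.sqrt = cfc Real.sqrt A := by
  rw [hA.1.cfc_eq]
  rfl

theorem IsHermitian.inv_add_smul_one_eq_cfc {A : Matrix n n 𝕜} (hA : A.IsHermitian) {s : ℝ}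
    (hs : ∀ i, hA.eigenvalues i + s ≠ 0) :
    (A + (s : 𝕜) • 1)⁻¹ = cfc (fun x => (x + s)⁻¹) A := by
  refine inv_eq_left_inv ?_
  have hA' : A + (s : 𝕜) • 1 = cfc (fun x => x + s) A := by
    rw [cfc_add_const s (fun x => x) A, cfc_id' ℝ A, Algebra.algebraMap_eq_smul_one,
      RCLike.real_smul_eq_coe_smul (K := 𝕜)]
  rw [hA', ← cfc_mul _ _ A (A.finite_real_spectrum.continuousOn _), ← cfc_one ℝ A]
  refine cfc_congr fun x hx => ?_
  rw [hA.spectrum_real_eq_range_eigenvalues] at hx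
  obtain ⟨i, rfl⟩ := hx
  exact inv_mul_cancel₀ (hs i)

theorem IsHermitian.trace_mul_self {A : Matrix n n 𝕜} (hA : A.IsHermitian) :
    (A * A).trace = ((∑ i, hA.eigenvalues i ^ 2 : ℝ) : 𝕜) := by
  rw [← sq, ← cfc_pow_id (R := ℝ) A 2, hA.trace_cfc]

theorem IsHermitian.traceNorm_eq_sum_abs_eigenvalues {A : Matrix n n ℂ} (hA : A.IsHermitian) :
    traceNorm A = ∑ i, |hA.eigenvalues i| := by
  have hsqrt : cfc Real.sqrt (A * A) = cfc (fun x : ℝ => |x|) A := by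
    rw [← sq, ← cfc_pow_id (R := ℝ) A 2, ← cfc_comp Real.sqrt (· ^ 2) A]
    exact congrArg (cfc · A) (funext fun x => Real.sqrt_sq_eq_abs x)
  rw [traceNorm, PosSemidef.sqrt_eq_cfc, hA.eq, hsqrt, hA.trace_cfc, ← RCLike.re_to_complex,
    RCLike.ofReal_re]

theorem IsHermitian.re_trace_mul_self_le_traceNorm_sq {A : Matrix n n ℂ} (hA : A.IsHermitian) :
    (A * A).trace.re ≤ traceNorm A ^ 2 := by
  rw [hA.trace_mul_self, ← RCLike.re_to_complex, RCLike.ofReal_re,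
    hA.traceNorm_eq_sum_abs_eigenvalues]
  simpa only [sq_abs] using
    Finset.sum_sq_le_sq_sum_of_nonneg (fun i _ => abs_nonneg (hA.eigenvalues i))

theorem IsHermitian.trace_diagonal_mul_mul_diagonal_mul {B : Matrix n n 𝕜} (hB : B.IsHermitian)
    (a b : n → ℝ) :
    (diagonal (fun i => (a i : 𝕜)) * B * diagonal (fun j => (b j : 𝕜)) * B).trace =
      ((∑ i, ∑ j, a i * b j * ‖B i j‖ ^ 2 : ℝ) : 𝕜) := by
  simp only [trace, diag_apply, RCLike.ofReal_sum]
  refine Finset.sum_congr rfl fun i _ => ?_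
  rw [mul_apply]
  refine Finset.sum_congr rfl fun j _ => ?_
  rw [mul_diagonal, diagonal_mul, ← hB.apply j i, RCLike.star_def]
  push_cast
  rw [← RCLike.mul_conj]
  ring

theorem IsHermitian.trace_mul_self_eq_sum_norm_sq {B : Matrix n n 𝕜} (hB : B.IsHermitian) :
    (B * B).trace = ((∑ i, ∑ j, ‖B i j‖ ^ 2 : ℝ) : 𝕜) := by
  have h := hB.trace_diagonal_mul_mul_diagonal_mul 1 1
  simp only [Pi.one_apply, RCLike.ofReal_one, one_mul, diagonal_one, mul_one] at h
  exact h

theorem IsHermitian.norm_trace_diagonal_mul_mul_diagonal_mul_le {B : Matrix n n 𝕜}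
    (hB : B.IsHermitian) {a b : n → ℝ} {α β : ℝ} (ha : ∀ i, 0 ≤ a i ∧ a i ≤ α)
    (hb : ∀ j, 0 ≤ b j ∧ b j ≤ β) :
    ‖(diagonal (fun i => (a i : 𝕜)) * B * diagonal (fun j => (b j : 𝕜)) * B).trace‖ ≤
      α * β * RCLike.re (B * B).trace := by
  rw [hB.trace_diagonal_mul_mul_diagonal_mul, hB.trace_mul_self_eq_sum_norm_sq, RCLike.ofReal_re,
    RCLike.norm_ofReal, Finset.mul_sum]
  refine (Finset.abs_sum_le_sum_abs _ _).trans (Finset.sum_le_sum fun i _ => ?_)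
  rw [Finset.mul_sum]
  refine (Finset.abs_sum_le_sum_abs _ _).trans (Finset.sum_le_sum fun j _ => ?_)
  obtain ⟨ha0, haα⟩ := ha i
  obtain ⟨hb0, hbβ⟩ := hb j
  have hα : 0 ≤ α := ha0.trans haα
  rw [abs_of_nonneg (by positivity)]
  gcongr

theorem IsHermitian.norm_trace_resolvent_mul_le {ρ Δ : Matrix n n 𝕜} (hρ : ρ.IsHermitian)
    (hΔ : Δ.IsHermitian) {lam s : ℝ} (hlam : ∀ i, lam ≤ hρ.eigenvalues i) (hs : 0 < lam + s) :
    ‖((ρ + (s : 𝕜) • 1)⁻¹ * Δ * (ρ + (s : 𝕜) • 1)⁻¹ * Δ * (ρ + (s : 𝕜) • 1)⁻¹).trace‖ ≤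
      (lam + s)⁻¹ ^ 3 * RCLike.re (Δ * Δ).trace := by
  set e := Unitary.conjStarAlgAut 𝕜 _ hρ.eigenvectorUnitary
  set w : n → ℝ := fun i => (hρ.eigenvalues i + s)⁻¹
  have hw : ∀ i, 0 ≤ w i ∧ w i ≤ (lam + s)⁻¹ := fun i =>
    ⟨inv_nonneg.2 (by linarith [hlam i]), inv_anti₀ hs (by linarith [hlam i])⟩
  have hR : (ρ + (s : 𝕜) • 1)⁻¹ = e (diagonal fun i => (w i : 𝕜)) := by
    rw [hρ.inv_add_smul_one_eq_cfc fun i => by linarith [hlam i], hρ.cfc_eq]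
    rfl
  set B := e.symm Δ
  have hB : B.IsHermitian := hΔ.isSelfAdjoint.map e.symm
  have hΔB : Δ = e B := (e.apply_symm_apply Δ).symm
  have hDD : (diagonal fun i => (w i : 𝕜)) * diagonal (fun i => (w i : 𝕜)) =
      diagonal fun i => ((w i ^ 2 : ℝ) : 𝕜) := by
    rw [diagonal_mul_diagonal]
    push_cast
    simp only [sq]
  have hsandwich :
      ((ρ + (s : 𝕜) • 1)⁻¹ * Δ * (ρ + (s : 𝕜) • 1)⁻¹ * Δ * (ρ + (s : 𝕜) • 1)⁻¹).trace =
        (diagonal (fun i => ((w i ^ 2 : ℝ) : 𝕜)) * B * diagonal (fun i => (w i : 𝕜)) * B).trace := by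
    rw [hR, hΔB, ← map_mul, ← map_mul, ← map_mul, ← map_mul, trace_conjStarAlgAut, trace_mul_comm,
      ← hDD]
    simp only [mul_assoc]
  have hBB : (B * B).trace = (Δ * Δ).trace := by
    rw [← trace_conjStarAlgAut hρ.eigenvectorUnitary (B * B), map_mul, ← hΔB]
  calc _ = _ := congrArg norm hsandwich
    _ ≤ (lam + s)⁻¹ ^ 2 * (lam + s)⁻¹ * RCLike.re (B * B).trace :=
      hB.norm_trace_diagonal_mul_mul_diagonal_mul_le
        (fun i => ⟨sq_nonneg _, pow_le_pow_left₀ (hw i).1 (hw i).2 2⟩) hw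
    _ = (lam + s)⁻¹ ^ 3 * RCLike.re (Δ * Δ).trace := by rw [hBB]; ring

end Matrix

section ImproperIntegral

open Filter Topology Set

variable {l : ℝ}

theorem hasDerivAt_half_mul_inv_add_sq_sub_inv_add {x : ℝ} (hx : 0 < l + x) :
    HasDerivAt (fun y => l / 2 * (l + y)⁻¹ ^ 2 - (l + y)⁻¹) (x * (l + x)⁻¹ ^ 3) x := by
  have hadd : HasDerivAt (fun y => l + y) 1 x := by simpa using (hasDerivAt_id x).const_add l
  have hinv : HasDerivAt (fun y => (l + y)⁻¹) (-1 / (l + x) ^ 2) x := hadd.inv hx.ne'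
  refine (((hinv.pow 2).const_mul (l / 2)).sub hinv).congr_deriv ?_
  have := hx.ne'
  simp only [Nat.cast_ofNat, Nat.add_one_sub_one, pow_one]
  field_simp
  ring

theorem tendsto_half_mul_inv_add_sq_sub_inv_add_atTop (l : ℝ) :
    Tendsto (fun y => l / 2 * (l + y)⁻¹ ^ 2 - (l + y)⁻¹) atTop (𝓝 0) := by
  have hinv : Tendsto (fun y => (l + y)⁻¹) atTop (𝓝 0) :=
    (tendsto_atTop_add_const_left _ l tendsto_id).inv_tendsto_atTop
  simpa using (hinv.pow 2).const_mul (l / 2) |>.sub hinv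

theorem integrableOn_Ioi_mul_inv_add_pow_three (hl : 0 < l) :
    IntegrableOn (fun s => s * (l + s)⁻¹ ^ 3) (Ioi 0) :=
  integrableOn_Ioi_deriv_of_nonneg'
    (fun _ hx => hasDerivAt_half_mul_inv_add_sq_sub_inv_add (by linarith [mem_Ici.1 hx]))
    (fun _ hx => by have := mem_Ioi.1 hx; positivity)
    (tendsto_half_mul_inv_add_sq_sub_inv_add_atTop l)

theorem integral_Ioi_mul_inv_add_pow_three (hl : 0 < l) :
    ∫ s in Ioi 0, s * (l + s)⁻¹ ^ 3 = (2 * l)⁻¹ := by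
  rw [integral_Ioi_of_hasDerivAt_of_nonneg'
    (fun _ hx => hasDerivAt_half_mul_inv_add_sq_sub_inv_add (by linarith [mem_Ici.1 hx]))
    (fun _ hx => by have := mem_Ioi.1 hx; positivity)
    (tendsto_half_mul_inv_add_sq_sub_inv_add_atTop l)]
  field_simp
  ring

end ImproperIntegral

theorem ContinuousLinearMap.norm_map_integral_le {X 𝕜 E F : Type*} [MeasurableSpace X]
    {μ : Measure X} [RCLike 𝕜] [NormedAddCommGroup E] [NormedSpace 𝕜 E] [NormedSpace ℝ E]
    [CompleteSpace E] [NormedAddCommGroup F] [NormedSpace 𝕜 F] [NormedSpace ℝ F]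
    [CompleteSpace F]
    (L : E →L[𝕜] F) {f : X → E} {g : X → ℝ} (hg : Integrable g μ)
    (h : ∀ᵐ x ∂μ, ‖L (f x)‖ ≤ g x) : ‖L (∫ x, f x ∂μ)‖ ≤ ∫ x, g x ∂μ := by
  by_cases hf : Integrable f μ
  · rw [← L.integral_comp_comm hf]
    exact norm_integral_le_of_norm_le hg h
  · rw [integral_undef hf, map_zero, norm_zero]
    exact integral_nonneg_of_ae (h.mono fun x hx => (norm_nonneg _).trans hx)

/-- For `ρ̃` positive definite with smallest eigenvalue `λ_min` and `Δρ` self-adjoint,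
`|tr ∫₀^∞ s (ρ̃+s)⁻¹ Δρ (ρ̃+s)⁻¹ Δρ (ρ̃+s)⁻¹ ds| ≤ ‖Δρ‖₁² / (2 λ_min)`. -/
theorem abs_trace_second_order_le {n : Type*} [Fintype n] [DecidableEq n]
    (ρ : Matrix n n ℂ) (hρ : ρ.PosDef) (Δ : Matrix n n ℂ) (hΔ : Δ.IsHermitian)
    (lamMin : ℝ) (hlam : IsLeast (Set.range hρ.1.eigenvalues) lamMin) (hpos : 0 < lamMin) :
    ‖((∫ s : ℝ in Set.Ioi 0,
          ((s : ℂ) • ((ρ + (s : ℂ) • 1)⁻¹ * Δ * (ρ + (s : ℂ) • 1)⁻¹ * Δ *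
            (ρ + (s : ℂ) • 1)⁻¹))).trace)‖ ≤
      traceNorm Δ ^ 2 / (2 * lamMin) := by
  have hbound : ∀ s ∈ Set.Ioi (0 : ℝ),
      ‖((s : ℂ) • ((ρ + (s : ℂ) • 1)⁻¹ * Δ * (ρ + (s : ℂ) • 1)⁻¹ * Δ *
        (ρ + (s : ℂ) • 1)⁻¹)).trace‖ ≤ traceNorm Δ ^ 2 * (s * (lamMin + s)⁻¹ ^ 3) := by
    rintro s (hs : 0 < s)
    rw [trace_smul, norm_smul, Complex.norm_real, Real.norm_of_nonneg hs.le]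
    calc _ ≤ s * ((lamMin + s)⁻¹ ^ 3 * (Δ * Δ).trace.re) :=
          mul_le_mul_of_nonneg_left (hρ.1.norm_trace_resolvent_mul_le hΔ
            (fun i => hlam.2 ⟨i, rfl⟩) (by linarith)) hs.le
      _ ≤ s * ((lamMin + s)⁻¹ ^ 3 * traceNorm Δ ^ 2) := by
          gcongr
          exact hΔ.re_trace_mul_self_le_traceNorm_sq
      _ = _ := by ring
  calc _ ≤ ∫ s in Set.Ioi 0, traceNorm Δ ^ 2 * (s * (lamMin + s)⁻¹ ^ 3) :=
        (traceLinearMap n ℂ ℂ).toContinuousLinearMap.norm_map_integral_le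
          ((integrableOn_Ioi_mul_inv_add_pow_three hpos).const_mul _)
          ((ae_restrict_iff' measurableSet_Ioi).2 (.of_forall hbound))
    _ = traceNorm Δ ^ 2 / (2 * lamMin) := by
        rw [integral_const_mul, integral_Ioi_mul_inv_add_pow_three hpos, div_eq_mul_inv]
end
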